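/- If T is a Frobenius monad on a dagger category C, then the operation sending a Kleisli morphism f : A → T(B) to T(f†) ∘ μ_B† ∘ η_B : B → T(A) defines a dagger on the Kleisli category C_T (it is contravariant and involutive for Kleisli composition and fixes objects), and the canonical functors C → C_T and C_T → C are dagger functors. -/

import Mathlib

open CategoryTheory Category MonoidalCategory

universe v u

/-- A dagger structure on a category: a contravariant, identity-on-objects,
involutive operation on morphisms. -/
class DaggerStruct (C : Type u) [Category.{v} C] where
  dag : ∀ {X Y : C}, (X ⟶ Y) → (Y ⟶ X)
  dag_dag : ∀ {X Y : C} (f : X ⟶ Y), dag (dag f) = f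
  dag_id : ∀ X : C, dag (𝟙 X) = 𝟙 X
  dag_comp : ∀ {X Y Z : C} (f : X ⟶ Y) (g : Y ⟶ Z), dag (f ≫ g) = dag g ≫ dag f

notation:max f "†" => DaggerStruct.dag f

/-- A monoidal dagger category: the dagger cooperates with the monoidal structure. -/
class MonoidalDagger (C : Type u) [Category.{v} C] [MonoidalCategory C] extends
    DaggerStruct C where
  dag_tensor : ∀ {X₁ Y₁ X₂ Y₂ : C} (f : X₁ ⟶ Y₁) (g : X₂ ⟶ Y₂), (f ⊗ₘ g)† = f† ⊗ₘ g†
  assoc_unitary : ∀ X Y Z : C, ((α_ X Y Z).hom)† = (α_ X Y Z).inv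
  lunitor_unitary : ∀ X : C, ((λ_ X).hom)† = (λ_ X).inv
  runitor_unitary : ∀ X : C, ((ρ_ X).hom)† = (ρ_ X).inv

/-- A symmetric monoidal dagger category: additionally the symmetries are unitary. -/
class SymmetricDagger (C : Type u) [Category.{v} C] [MonoidalCategory C]
    [SymmetricCategory C] extends MonoidalDagger C where
  braiding_unitary : ∀ X Y : C, ((β_ X Y).hom)† = (β_ X Y).inv

/-- A monoid object, given by explicit data. -/
structure IsMonoidObj {C : Type u} [Category.{v} C] [MonoidalCategory C] (A : C)
    (m : A ⊗ A ⟶ A) (u : 𝟙_ C ⟶ A) : Prop where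
  mul_assoc : (m ⊗ₘ 𝟙 A) ≫ m = (α_ A A A).hom ≫ (𝟙 A ⊗ₘ m) ≫ m
  one_mul : (u ⊗ₘ 𝟙 A) ≫ m = (λ_ A).hom
  mul_one : (𝟙 A ⊗ₘ u) ≫ m = (ρ_ A).hom

/-- A Frobenius monoid in a monoidal dagger category. -/
structure IsFrobeniusMonoid {C : Type u} [Category.{v} C] [MonoidalCategory C]
    [MonoidalDagger C] (A : C) (m : A ⊗ A ⟶ A) (u : 𝟙_ C ⟶ A) extends
    IsMonoidObj A m u : Prop where
  frobenius : (m† ⊗ₘ 𝟙 A) ≫ (α_ A A A).hom ≫ (𝟙 A ⊗ₘ m) =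
    (𝟙 A ⊗ₘ m†) ≫ (α_ A A A).inv ≫ (m ⊗ₘ 𝟙 A)

/-- A Frobenius monad on a dagger category. -/
structure IsFrobeniusMonad {C : Type u} [Category.{v} C] [DaggerStruct C]
    (T : Monad C) : Prop where
  map_dag : ∀ {X Y : C} (f : X ⟶ Y), T.map (f†) = (T.map f)†
  frobenius : ∀ A : C,
    ((T.μ.app (T.obj A))†) ≫ T.map (T.μ.app A) =
      T.map ((T.μ.app A)†) ≫ T.μ.app (T.obj A)

/-- The dagger on the Kleisli category of a Frobenius monad:
`f : A ⟶ T(B)` is sent to `T(f†) ∘ μ_B† ∘ η_B : B ⟶ T(A)`. -/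
def kleisliDag {C : Type u} [Category.{v} C] [DaggerStruct C] (T : Monad C)
    {X Y : C} (f : X ⟶ T.obj Y) : Y ⟶ T.obj X :=
  T.η.app Y ≫ ((T.μ.app Y)†) ≫ T.map (f†)

/-! The forgetful functor `C_T ⥤ C`, `f ↦ μ ∘ T(f)`, is faithful, since `f = η ≫ T(f) ≫ μ`.
For a Frobenius monad it carries `kleisliDag` to the dagger of `C`: the Frobenius law together
with the unit law gives `μ† = T(η) ≫ T(μ†) ≫ μ`, and hence `μ ∘ T(kleisliDag f) = (μ ∘ T(f))†`.
Each Kleisli dagger law is therefore the corresponding law of `†` in `C`, pulled back along a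
faithful functor that preserves Kleisli composition. -/

namespace CategoryTheory.Monad

variable {C : Type u} [Category.{v} C] (T : Monad C)

lemma map_map_comp_μ {X Y : C} (h : X ⟶ Y) :
    T.map (T.map h) ≫ T.μ.app Y = T.μ.app X ≫ T.map h :=
  T.μ.naturality h

lemma η_comp_map_comp_μ {X Y : C} (f : X ⟶ T.obj Y) : T.η.app X ≫ T.map f ≫ T.μ.app Y = f := by
  rw [← T.η.naturality_assoc f, Functor.id_map, T.left_unit, comp_id]

lemma eq_of_map_comp_μ_eq {X Y : C} {f g : X ⟶ T.obj Y}
    (h : T.map f ≫ T.μ.app Y = T.map g ≫ T.μ.app Y) : f = g := by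
  rw [← T.η_comp_map_comp_μ f, h, T.η_comp_map_comp_μ]

lemma map_kleisliComp_comp_μ {X Y Z : C} (f : X ⟶ T.obj Y) (g : Y ⟶ T.obj Z) :
    T.map (f ≫ T.map g ≫ T.μ.app Z) ≫ T.μ.app Z =
      (T.map f ≫ T.μ.app Y) ≫ T.map g ≫ T.μ.app Z := by
  simp only [Functor.map_comp, Category.assoc, T.assoc]
  rw [← Category.assoc (T.map (T.map g)), T.map_map_comp_μ, Category.assoc]

lemma map_comp_η_comp_μ {X Y : C} (f : X ⟶ Y) :
    T.map (f ≫ T.η.app Y) ≫ T.μ.app Y = T.map f := by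
  rw [Functor.map_comp, Category.assoc, T.right_unit]
  exact comp_id _

end CategoryTheory.Monad

namespace IsFrobeniusMonad

open DaggerStruct

variable {C : Type u} [Category.{v} C] [DaggerStruct C] {T : Monad C}

lemma map_comp_μ_dag (hT : IsFrobeniusMonad T) {X Y : C} (h : Y ⟶ X) :
    T.map h ≫ (T.μ.app X)† = (T.μ.app Y)† ≫ T.map (T.map h) := by
  simpa only [dag_comp, ← hT.map_dag, dag_dag] using (congrArg dag (T.map_map_comp_μ h†)).symm

lemma μ_dag_eq (hT : IsFrobeniusMonad T) (A : C) :
    (T.μ.app A)† = T.map (T.η.app A) ≫ T.map (T.μ.app A)† ≫ T.μ.app (T.obj A) := by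
  calc (T.μ.app A)†
      = (T.μ.app A)† ≫ T.map (T.map (T.η.app A) ≫ T.μ.app A) := by
        simp
    _ = (T.map (T.η.app A) ≫ (T.μ.app (T.obj A))†) ≫ T.map (T.μ.app A) := by
        rw [hT.map_comp_μ_dag, T.map_comp, assoc]; rfl
    _ = T.map (T.η.app A) ≫ T.map (T.μ.app A)† ≫ T.μ.app (T.obj A) := by
        rw [assoc, hT.frobenius]

lemma map_kleisliDag_comp_μ (hT : IsFrobeniusMonad T) {X Y : C} (f : X ⟶ T.obj Y) :
    T.map (kleisliDag T f) ≫ T.μ.app X = (T.map f ≫ T.μ.app Y)† := by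
  calc T.map (kleisliDag T f) ≫ T.μ.app X
      = (T.map (T.η.app Y) ≫ T.map (T.μ.app Y)†) ≫ T.map (T.map f†) ≫ T.μ.app X := by
        simp only [kleisliDag, Functor.map_comp, assoc]
    _ = (T.map (T.η.app Y) ≫ T.map (T.μ.app Y)† ≫ T.μ.app (T.obj Y)) ≫ T.map f† := by
        rw [T.map_map_comp_μ]; simp only [assoc]
    _ = (T.map f ≫ T.μ.app Y)† := by
        rw [← hT.μ_dag_eq, dag_comp, hT.map_dag]

end IsFrobeniusMonad

/-- STATEMENT 10: if `T` is a Frobenius monad on a dagger category `C`, then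
`f ↦ T(f†) ∘ μ† ∘ η` is a dagger on the Kleisli category `C_T` (involutive,
identity-on-objects and contravariant for Kleisli composition), and the canonical
functors `C → C_T` (`f ↦ η ∘ f`) and `C_T → C` (`f ↦ μ ∘ T(f)`) are dagger functors. -/
theorem kleisli_dagger {C : Type u} [Category.{v} C] [DaggerStruct C] (T : Monad C)
    (hT : IsFrobeniusMonad T) :
    (∀ {X Y : C} (f : X ⟶ T.obj Y), kleisliDag T (kleisliDag T f) = f) ∧
    (∀ X : C, kleisliDag T (T.η.app X) = T.η.app X) ∧
    (∀ {X Y Z : C} (f : X ⟶ T.obj Y) (g : Y ⟶ T.obj Z),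
      kleisliDag T (f ≫ T.map g ≫ T.μ.app Z) =
        kleisliDag T g ≫ T.map (kleisliDag T f) ≫ T.μ.app X) ∧
    (∀ {X Y : C} (f : X ⟶ Y), kleisliDag T (f ≫ T.η.app Y) = (f†) ≫ T.η.app X) ∧
    (∀ {X Y : C} (f : X ⟶ T.obj Y),
      T.map (kleisliDag T f) ≫ T.μ.app X = ((T.map f ≫ T.μ.app Y)†)) := by
  have forget_dag := @hT.map_kleisliDag_comp_μ
  refine ⟨fun f => ?_, fun X => ?_, fun f g => ?_, fun f => ?_, forget_dag⟩ <;>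
    apply T.eq_of_map_comp_μ_eq
  · rw [forget_dag, forget_dag, DaggerStruct.dag_dag]
  · rw [forget_dag, T.right_unit, DaggerStruct.dag_id]; exact (T.right_unit X).symm
  · rw [forget_dag, T.map_kleisliComp_comp_μ, DaggerStruct.dag_comp, T.map_kleisliComp_comp_μ,
      forget_dag, forget_dag]
  · rw [forget_dag, T.map_comp_η_comp_μ, T.map_comp_η_comp_μ, hT.map_dag]
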